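/- arXiv:2211.10614 — 4 statements merged into one kernel-verified Lean document; each statement's English description precedes it below -/
import Mathlib

section
/- If G is a connected bipartite simple graph with at least 3 vertices, then the nonlocal metric dimension of G equals the metric dimension of G, i.e., dim_nl(G) = dim(G). -/
/-- `X` is a nonlocal resolving set of `G`: every pair of distinct non-adjacent
vertices is resolved by some vertex of `X`. -/
def IsNLResolving {V : Type*} (G : SimpleGraph V) (X : Finset V) : Prop :=
  ∀ u v : V, u ≠ v → ¬ G.Adj u v → ∃ x ∈ X, G.dist u x ≠ G.dist v x

/-- The nonlocal metric dimension of `G`. -/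
noncomputable def nldim {V : Type*} [Fintype V] (G : SimpleGraph V) : ℕ :=
  sInf {n | ∃ X : Finset V, X.card = n ∧ IsNLResolving G X}

/-- `X` is a resolving set of `G`. -/
def IsResolving {V : Type*} (G : SimpleGraph V) (X : Finset V) : Prop :=
  ∀ u v : V, u ≠ v → ∃ x ∈ X, G.dist u x ≠ G.dist v x

/-- The metric dimension of `G`. -/
noncomputable def metricDim {V : Type*} [Fintype V] (G : SimpleGraph V) : ℕ :=
  sInf {n | ∃ X : Finset V, X.card = n ∧ IsResolving G X}

/-- The corona product `G ⊙ H`: one copy of `G` and, for each vertex `g` of `G`,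
a copy of `H` whose vertices are all joined to `g`. -/
def corona {V W : Type*} (G : SimpleGraph V) (H : SimpleGraph W) :
    SimpleGraph (V ⊕ V × W) :=
  SimpleGraph.fromRel (fun a b =>
    match a, b with
    | Sum.inl g, Sum.inl g' => G.Adj g g'
    | Sum.inl g, Sum.inr p => g = p.1
    | Sum.inr p, Sum.inr q => p.1 = q.1 ∧ H.Adj p.2 q.2
    | _, _ => False)

/-- The join `H + K₁`: a new vertex (`none`) adjacent to every vertex of `H`. -/
def joinK1 {W : Type*} (H : SimpleGraph W) : SimpleGraph (Option W) :=
  SimpleGraph.fromRel (fun a b =>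
    a = none ∨ ∃ w w', a = some w ∧ b = some w' ∧ H.Adj w w')

/-- The wheel `W_{1,n} = K₁ + Cₙ`, with central vertex `none`. -/
def wheel (n : ℕ) : SimpleGraph (Option (Fin n)) :=
  joinK1 (SimpleGraph.cycleGraph n)

/-- `A_{i,j}` is a gap of `X ⊆ V(Cₙ)`: `i, j ∈ X`, `i ≠ j`, and no vertex of
`{i+1, …, j-1}` (cyclically) lies in `X`. -/
def IsGap {n : ℕ} (X : Finset (Fin n)) (i j : Fin n) : Prop :=
  i ∈ X ∧ j ∈ X ∧ i ≠ j ∧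
    ∀ k : Fin n, 0 < (k - i).val → (k - i).val < (j - i).val → k ∉ X

/-- The number of vertices in the gap `A_{i,j} = {i+1, …, j-1}`. -/
def gapSize {n : ℕ} (i j : Fin n) : ℕ := (j - i).val - 1

/-- The edge cover number `β'(G)`: the least number of edges of `G` covering all
vertices. -/
noncomputable def edgeCoverNum {V : Type*} [Fintype V] (G : SimpleGraph V) : ℕ :=
  sInf {n | ∃ F : Finset (Sym2 V), F.card = n ∧ ↑F ⊆ G.edgeSet ∧ ∀ v : V, ∃ e ∈ F, v ∈ e}


/-!
In a bipartite graph the parity of `dist u x` records whether `u` and `x` lie on the same side,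
so in a connected bipartite graph every vertex resolves every pair of adjacent vertices. Hence a
nonempty nonlocal resolving set is resolving. With at least three vertices, two lie on the same
side and form a non-adjacent pair, which only a nonempty set can resolve.
-/

open SimpleGraph

section

variable {V : Type*} {G : SimpleGraph V}

namespace SimpleGraph.Coloring

theorem even_dist_iff (c : G.Coloring Bool) {u v : V} (h : G.Reachable u v) :
    Even (G.dist u v) ↔ (c u ↔ c v) := by
  obtain ⟨p, hp⟩ := h.exists_walk_length_eq_dist
  rw [← hp, c.even_length_iff_congr p]

theorem dist_ne_of_adj (hG : G.Connected) (c : G.Coloring Bool) {u v : V} (h : G.Adj u v)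
    (x : V) : G.dist u x ≠ G.dist v x := by
  intro he
  have hu := c.even_dist_iff (hG u x)
  rw [he, c.even_dist_iff (hG v x)] at hu
  apply c.valid h
  rw [Bool.eq_iff_iff]
  tauto

theorem exists_ne_not_adj [Fintype V] (c : G.Coloring Bool) (hn : 3 ≤ Fintype.card V) :
    ∃ u v : V, u ≠ v ∧ ¬ G.Adj u v := by
  obtain ⟨u, v, huv, hc⟩ := Fintype.exists_ne_map_eq_of_card_lt c (by simp; omega)
  exact ⟨u, v, huv, fun h => c.valid h hc⟩

end SimpleGraph.Coloring

theorem IsResolving.isNLResolving {X : Finset V} (hX : IsResolving G X) : IsNLResolving G X :=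
  fun u v huv _ => hX u v huv

theorem IsNLResolving.nonempty {X : Finset V} (hX : IsNLResolving G X)
    (h : ∃ u v : V, u ≠ v ∧ ¬ G.Adj u v) : X.Nonempty := by
  obtain ⟨u, v, huv, hadj⟩ := h
  obtain ⟨x, hx, -⟩ := hX u v huv hadj
  exact ⟨x, hx⟩

theorem isNLResolving_iff_isResolving [Fintype V] (hG : G.Connected) (c : G.Coloring Bool)
    (hn : 3 ≤ Fintype.card V) (X : Finset V) : IsNLResolving G X ↔ IsResolving G X := by
  refine ⟨fun hX u v huv => ?_, IsResolving.isNLResolving⟩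
  by_cases hadj : G.Adj u v
  · obtain ⟨x, hx⟩ := hX.nonempty (c.exists_ne_not_adj hn)
    exact ⟨x, hx, c.dist_ne_of_adj hG hadj x⟩
  · exact hX u v huv hadj

end

/-- For a connected bipartite graph `G` with at least `3`
vertices, `dim_nl(G) = dim(G)`. -/
theorem stmt_4 {V : Type*} [Fintype V] (G : SimpleGraph V) (hG : G.Connected)
    (hn : 3 ≤ Fintype.card V)
    (hbip : ∃ A : Set V, ∀ u v : V, G.Adj u v →
      ((u ∈ A ∧ v ∉ A) ∨ (u ∉ A ∧ v ∈ A))) :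
    nldim G = metricDim G := by
  classical
  obtain ⟨A, hA⟩ := hbip
  let c : G.Coloring Bool := Coloring.mk (fun v => decide (v ∈ A)) fun {u v} h => by
    rcases hA u v h with ⟨hu, hv⟩ | ⟨hu, hv⟩ <;> simp [hu, hv]
  simp only [nldim, metricDim, isNLResolving_iff_isResolving hG c hn]
end

section
/- If G is a connected simple graph and n ≥ 1, then dim(G) ≤ dim_nl(G ⊙ K_n) ≤ n(G), where G ⊙ K_n is the corona product of G with the complete graph K_n and n(G) is the number of vertices of G. -/
/-!
A vertex `a` of `G ⊙ H` lies over a vertex `base a` of `G`, at distance `level a ∈ {0, 1}` from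
it, and two vertices over different bases are at distance
`d_G(base a, base b) + level a + level b`. When `H = Kₙ`, vertices over the same base are adjacent,
so choosing one vertex `(g, z)` in every copy of `Kₙ` resolves all non-adjacent pairs: the landmark
over `base u` is within distance 1 of `u` but at distance at least 2 from any `v` over another
base. Conversely, the vertices `(g, z)` and `(g', z)` with `g ≠ g'` are non-adjacent, and by the
distance formula a vertex resolving them projects to a vertex of `G` resolving `g` and `g'`; so the
bases of a nonlocal resolving set of `G ⊙ Kₙ` form a resolving set of `G`.
-/

open SimpleGraph Sum Finset

lemma metricDim_le_card {V : Type*} [Fintype V] {G : SimpleGraph V} {X : Finset V}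
    (hX : IsResolving G X) : metricDim G ≤ X.card :=
  Nat.sInf_le ⟨X, rfl, hX⟩

lemma nldim_le_card {V : Type*} [Fintype V] {G : SimpleGraph V} {X : Finset V}
    (hX : IsNLResolving G X) : nldim G ≤ X.card :=
  Nat.sInf_le ⟨X, rfl, hX⟩

lemma exists_isNLResolving_card_eq_nldim {V : Type*} [Fintype V] {G : SimpleGraph V}
    (h : ∃ X, IsNLResolving G X) : ∃ X, IsNLResolving G X ∧ X.card = nldim G := by
  obtain ⟨X, hX⟩ := h
  obtain ⟨Y, hYcard, hY⟩ :=
    Nat.sInf_mem (s := {n | ∃ X : Finset V, X.card = n ∧ IsNLResolving G X}) ⟨X.card, X, rfl, hX⟩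
  exact ⟨Y, hY, hYcard⟩

namespace Corona

variable {V W : Type*} {G : SimpleGraph V} {H : SimpleGraph W}

@[simp] lemma adj_inl_inl {g g' : V} :
    (corona G H).Adj (inl g) (inl g') ↔ G.Adj g g' := by
  simp only [corona, fromRel_adj, ne_eq, inl.injEq]
  exact ⟨fun h => h.2.elim id fun h => h.symm, fun h => ⟨h.ne, Or.inl h⟩⟩

@[simp] lemma adj_inl_inr {g : V} {p : V × W} :
    (corona G H).Adj (inl g) (inr p) ↔ g = p.1 := by
  simp [corona, fromRel_adj]

@[simp] lemma adj_inr_inl {g : V} {p : V × W} :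
    (corona G H).Adj (inr p) (inl g) ↔ p.1 = g := by
  rw [adj_comm, adj_inl_inr, eq_comm]

@[simp] lemma adj_inr_inr {p q : V × W} :
    (corona G H).Adj (inr p) (inr q) ↔ p.1 = q.1 ∧ H.Adj p.2 q.2 := by
  simp only [corona, fromRel_adj]
  refine ⟨fun ⟨_, h⟩ => h.elim id fun h => ⟨h.1.symm, h.2.symm⟩, fun h => ⟨?_, Or.inl h⟩⟩
  intro hpq
  exact h.2.ne (congrArg Prod.snd (inr_injective hpq))

def base : V ⊕ V × W → V := Sum.elim id Prod.fst

/-- The distance from a vertex of `G ⊙ H` to its `base`. -/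
def level : V ⊕ V × W → ℕ := Sum.elim (fun _ => 0) (fun _ => 1)

@[simp] lemma base_inl (g : V) : base (inl g : V ⊕ V × W) = g := rfl
@[simp] lemma base_inr (p : V × W) : base (inr p : V ⊕ V × W) = p.1 := rfl
@[simp] lemma level_inl (g : V) : level (inl g : V ⊕ V × W) = 0 := rfl
@[simp] lemma level_inr (p : V × W) : level (inr p : V ⊕ V × W) = 1 := rfl

lemma level_le_one (a : V ⊕ V × W) : level a ≤ 1 := by
  cases a <;> simp

lemma base_eq_or_adj_of_adj {a b : V ⊕ V × W} (h : (corona G H).Adj a b) :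
    base a = base b ∨ (G.Adj (base a) (base b) ∧ level a = 0 ∧ level b = 0) := by
  rcases a with g | p <;> rcases b with g' | q <;> simp_all

def inlHom (G : SimpleGraph V) (H : SimpleGraph W) : G →g corona G H where
  toFun := inl
  map_rel' := adj_inl_inl.mpr

def walkToBase : (a : V ⊕ V × W) → (corona G H).Walk a (inl (base a))
  | inl _ => .nil
  | inr _ => .cons (adj_inr_inl.mpr rfl) .nil

lemma length_walkToBase (a : V ⊕ V × W) :
    (walkToBase (G := G) (H := H) a).length = level a := by
  cases a <;> rfl

lemma exists_walk_length_eq (hG : G.Connected) (a b : V ⊕ V × W) :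
    ∃ w : (corona G H).Walk a b, w.length = G.dist (base a) (base b) + level a + level b := by
  obtain ⟨p, hp⟩ := hG.exists_walk_length_eq_dist (base a) (base b)
  obtain ⟨q, hq⟩ : ∃ q : (corona G H).Walk (inl (base a)) (inl (base b)),
      q.length = G.dist (base a) (base b) := ⟨p.map (inlHom G H), (Walk.length_map _ _).trans hp⟩
  refine ⟨(walkToBase a).append (q.append (walkToBase b).reverse), ?_⟩
  simp only [Walk.length_append, Walk.length_reverse, length_walkToBase, hq]
  ring

lemma dist_le (hG : G.Connected) (a b : V ⊕ V × W) :
    (corona G H).dist a b ≤ G.dist (base a) (base b) + level a + level b := by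
  obtain ⟨w, hw⟩ := exists_walk_length_eq (H := H) hG a b
  exact hw ▸ SimpleGraph.dist_le w

lemma connected (hG : G.Connected) : (corona G H).Connected :=
  connected_iff_exists_forall_reachable _ |>.mpr
    ⟨inl hG.nonempty.some, fun b => (exists_walk_length_eq hG _ b).elim fun w _ => ⟨w⟩⟩

lemma le_length_of_base_ne (hG : G.Connected) {a b : V ⊕ V × W} (w : (corona G H).Walk a b)
    (hab : base a ≠ base b) : G.dist (base a) (base b) + level a + level b ≤ w.length := by
  induction w with
  | nil => exact absurd rfl hab
  | @cons a c b hac w ih =>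
    rw [Walk.length_cons]
    rcases base_eq_or_adj_of_adj hac with hbase | ⟨hadj, ha, hc⟩
    · have := ih (hbase ▸ hab)
      have := level_le_one a
      rw [hbase]
      omega
    · have hdist : G.dist (base a) (base c) = 1 := dist_eq_one_iff_adj.mpr hadj
      by_cases hcb : base c = base b
      · rw [← hcb, hdist]
        rcases Nat.eq_zero_or_pos w.length with h0 | hpos
        · cases Walk.eq_of_length_eq_zero h0
          omega
        · have := level_le_one b
          omega
      · have := ih hcb
        have := hG.dist_triangle (u := base a) (v := base c) (w := base b)
        omega

lemma dist_eq_of_base_ne (hG : G.Connected) {a b : V ⊕ V × W} (hab : base a ≠ base b) :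
    (corona G H).dist a b = G.dist (base a) (base b) + level a + level b := by
  obtain ⟨w, hw⟩ := (connected (H := H) hG).preconnected a b |>.exists_walk_length_eq_dist
  exact (dist_le hG a b).antisymm (hw ▸ le_length_of_base_ne hG w hab)

lemma isResolving_image_base [DecidableEq V] (hG : G.Connected) (z : W)
    {X : Finset (V ⊕ V × W)} (hX : IsNLResolving (corona G H) X) :
    IsResolving G (X.image base) := by
  intro g g' hgg'
  obtain ⟨x, hxX, hx⟩ := hX (inr (g, z)) (inr (g', z)) (by simpa using hgg')
    (by simp [hgg'])
  refine ⟨base x, mem_image_of_mem _ hxX, fun hd => hx ?_⟩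
  have hg : g ≠ base x := by
    rintro rfl
    rw [SimpleGraph.dist_self] at hd
    exact hgg' (hG.dist_eq_zero_iff.mp hd.symm).symm
  have hg' : g' ≠ base x := by
    rintro rfl
    rw [SimpleGraph.dist_self] at hd
    exact hgg' (hG.dist_eq_zero_iff.mp hd)
  rw [dist_eq_of_base_ne (a := inr (g, z)) hG hg, dist_eq_of_base_ne (a := inr (g', z)) hG hg']
  simp only [base_inr, level_inr, hd]

lemma adj_of_base_eq {a b : V ⊕ V × W} (hab : a ≠ b) (h : base a = base b) :
    (corona G (⊤ : SimpleGraph W)).Adj a b := by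
  rcases a with g | p <;> rcases b with g' | q <;> simp_all
  exact fun h' => hab (Prod.ext h h')

def landmarks [Fintype V] (z : W) : Finset (V ⊕ V × W) :=
  univ.map ⟨fun g => inr (g, z), fun _ _ h => by simpa using h⟩

lemma card_landmarks [Fintype V] (z : W) :
    (landmarks z : Finset (V ⊕ V × W)).card = Fintype.card V := by
  simp [landmarks]

lemma isNLResolving_landmarks [Fintype V] (hG : G.Connected) (z : W) :
    IsNLResolving (corona G ⊤) (landmarks z) := by
  intro u v huv hnadj
  have hbase : base u ≠ base v := fun h => hnadj (adj_of_base_eq huv h)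
  refine ⟨inr (base u, z), mem_map_of_mem _ (mem_univ _), ?_⟩
  have hu : (corona G ⊤).dist u (inr (base u, z)) ≤ 1 := by
    rcases eq_or_ne u (inr (base u, z)) with h | h
    · rw [← h, SimpleGraph.dist_self]; omega
    · exact (dist_eq_one_iff_adj.mpr (adj_of_base_eq h rfl)).le
  have hv := dist_eq_of_base_ne (H := ⊤) hG (a := v) (b := inr (base u, z)) (Ne.symm hbase)
  have := hG.pos_dist_of_ne (Ne.symm hbase)
  simp only [base_inr, level_inr] at hv
  omega

end Corona

/-- If `G` is connected and `n ≥ 1`, then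
`dim(G) ≤ dim_nl(G ⊙ Kₙ) ≤ n(G)`. -/
theorem stmt_6 {V : Type*} [Fintype V] (G : SimpleGraph V) (hG : G.Connected)
    (n : ℕ) (hn : 1 ≤ n) :
    metricDim G ≤ nldim (corona G (⊤ : SimpleGraph (Fin n))) ∧
      nldim (corona G (⊤ : SimpleGraph (Fin n))) ≤ Fintype.card V := by
  classical
  let z : Fin n := ⟨0, hn⟩
  have hL := Corona.isNLResolving_landmarks hG z
  obtain ⟨X, hX, hXcard⟩ := exists_isNLResolving_card_eq_nldim ⟨_, hL⟩
  constructor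
  · calc metricDim G ≤ (X.image Corona.base).card :=
          metricDim_le_card (Corona.isResolving_image_base hG z hX)
      _ ≤ X.card := card_image_le
      _ = _ := hXcard
  · exact (nldim_le_card hL).trans (Corona.card_landmarks z).le
end

section
/- For every integer n ≥ 7, the nonlocal metric dimension of the wheel W_{1,n} equals ⌊2n/5⌋. -/
/-!
In `W_{1,n}` the centre is adjacent to every vertex, and two rim vertices are at distance 0, 1
or 2 according as they are equal, adjacent or neither. So the centre resolves no pair, and a set
is nonlocal resolving iff its rim part `P` meets the closed neighbourhoods of any two distinct
non-adjacent rim vertices differently.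

On `Cₙ`, `n ≥ 5`, this amounts to two local conditions: any two holes (runs of three consecutive
vertices outside `P`) overlap in two vertices, and every vertex of `P` has another one at distance
at most 2. Count `P` in the `n` windows of five consecutive vertices: every window meets `P`, a
window meeting `P` only once contains a hole, and since all holes start at `a` or `a + 1` this
happens for at most four windows; hence `5|P| ≥ 2n - 4`. Conversely, the vertices `≡ 0, 2 (mod 5)`
below `5⌊n/5⌋`, together with `n - 2` when `n mod 5 ≥ 3`, satisfy both conditions and number
`⌊2n/5⌋`.
-/

open Finset SimpleGraph

section joinK1

variable {W : Type*} {H : SimpleGraph W}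

def IsNLLocating (H : SimpleGraph W) (P : Finset W) : Prop :=
  ∀ u v, u ≠ v → ¬H.Adj u v → ∃ x ∈ P, ¬((x = u ∨ H.Adj u x) ↔ (x = v ∨ H.Adj v x))

lemma IsNLLocating.eq_or_adj {P : Finset W} (hP : IsNLLocating H P) {u v : W}
    (hu : ∀ x ∈ P, ¬(x = u ∨ H.Adj u x)) (hv : ∀ x ∈ P, ¬(x = v ∨ H.Adj v x)) :
    u = v ∨ H.Adj u v := by
  by_contra! h
  obtain ⟨x, hx, hne⟩ := hP u v h.1 h.2
  exact hne (iff_of_false (hu x hx) (hv x hx))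

lemma joinK1_adj_none_some (a : W) : (joinK1 H).Adj none (some a) := by
  simp [joinK1]

lemma joinK1_adj_some_some {a b : W} : (joinK1 H).Adj (some a) (some b) ↔ H.Adj a b := by
  simp only [joinK1, fromRel_adj, reduceCtorEq, Option.some.injEq, exists_and_left,
    exists_eq_left', false_or]
  exact ⟨fun h => h.2.elim id .symm, fun h => ⟨by simpa using h.ne, .inl h⟩⟩

lemma joinK1_reachable (u v : Option W) : (joinK1 H).Reachable u v := by
  have hnone : ∀ w, (joinK1 H).Reachable none w
    | none => .rfl
    | some a => (joinK1_adj_none_some a).reachable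
  exact (hnone u).symm.trans (hnone v)

lemma joinK1_dist_some_none (a : W) : (joinK1 H).dist (some a) none = 1 :=
  dist_eq_one_iff_adj.2 (joinK1_adj_none_some a).symm

open scoped Classical in
lemma joinK1_dist_some_some (a b : W) :
    (joinK1 H).dist (some a) (some b) = if a = b then 0 else if H.Adj a b then 1 else 2 := by
  split_ifs with hab hadj
  · rw [hab, dist_self]
  · exact dist_eq_one_iff_adj.2 (joinK1_adj_some_some.2 hadj)
  · have hle : (joinK1 H).dist (some a) (some b) ≤ 2 :=
      dist_le (.cons (joinK1_adj_none_some a).symm (.cons (joinK1_adj_none_some b) .nil))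
    have h0 : (joinK1 H).dist (some a) (some b) ≠ 0 := by
      rw [Ne, (joinK1_reachable _ _).dist_eq_zero_iff]; simpa using hab
    have h1 : (joinK1 H).dist (some a) (some b) ≠ 1 := by
      rwa [Ne, dist_eq_one_iff_adj, joinK1_adj_some_some]
    omega

open scoped Classical in
lemma joinK1_dist_eq_iff {u v x : W} (huv : u ≠ v) (hadj : ¬H.Adj u v) :
    (joinK1 H).dist (some u) (some x) = (joinK1 H).dist (some v) (some x) ↔
      ((x = u ∨ H.Adj u x) ↔ (x = v ∨ H.Adj v x)) := by
  rw [joinK1_dist_some_some, joinK1_dist_some_some]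
  split_ifs <;> subst_vars <;> grind [H.adj_comm]

lemma isNLResolving_joinK1_iff (X : Finset (Option W)) :
    IsNLResolving (joinK1 H) X ↔ IsNLLocating H X.eraseNone := by
  constructor
  · intro hX u v huv hadj
    obtain ⟨x, hx, hne⟩ := hX (some u) (some v) (by simpa) (by rwa [joinK1_adj_some_some])
    cases x with
    | none => simp [joinK1_dist_some_none] at hne
    | some x => exact ⟨x, mem_eraseNone.2 hx, mt (joinK1_dist_eq_iff huv hadj).2 hne⟩
  · intro hP u v huv hadj
    cases u with
    | none => cases v with
      | none => exact absurd rfl huv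
      | some b => exact absurd (joinK1_adj_none_some b) hadj
    | some a => cases v with
      | none => exact absurd (joinK1_adj_none_some a).symm hadj
      | some b =>
        have hab : a ≠ b := by simpa using huv
        have hadj' : ¬H.Adj a b := by rwa [← joinK1_adj_some_some]
        obtain ⟨x, hx, hne⟩ := hP a b hab hadj'
        exact ⟨some x, mem_eraseNone.1 hx, mt (joinK1_dist_eq_iff hab hadj').1 hne⟩

lemma nldim_joinK1 [Fintype W] :
    nldim (joinK1 H) = sInf {k | ∃ P : Finset W, #P = k ∧ IsNLLocating H P} := by
  have hmap (P : Finset W) (hP : IsNLLocating H P) :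
      IsNLResolving (joinK1 H) (P.map .some) := by
    rwa [isNLResolving_joinK1_iff, eraseNone_map_some]
  have huniv : IsNLLocating H univ := fun u v huv hadj =>
    ⟨u, mem_univ u, by simp [huv, hadj, H.adj_comm]⟩
  set S := {k | ∃ P : Finset W, #P = k ∧ IsNLLocating H P}
  apply le_antisymm
  · obtain ⟨P, hcard, hP⟩ : sInf S ∈ S := Nat.sInf_mem ⟨_, univ, rfl, huniv⟩
    exact Nat.sInf_le ⟨P.map .some, by rw [card_map, hcard], hmap P hP⟩
  · refine le_csInf ⟨_, _, rfl, hmap _ huniv⟩ ?_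
    rintro k ⟨X, rfl, hX⟩
    have hX' : #X.eraseNone ∈ S := ⟨_, rfl, (isNLResolving_joinK1_iff X).1 hX⟩
    exact (Nat.sInf_le hX').trans (card_eraseNone_le X)

end joinK1

/- Identities between small shifts `s + k` in `Fin n`, `n ≥ 5`, are decided below on values:
`simp [Fin.ext_iff, Fin.val_add_eq_ite, mod_eq_self_of_le_four hn]` makes the wrap-around explicit
in `ℕ`, and `grind` finishes. -/
lemma mod_eq_self_of_le_four {n k : ℕ} (hn : 5 ≤ n) (hk : k ≤ 4) : k % n = k :=
  Nat.mod_eq_of_lt (by omega)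

section cycleGraph

open scoped Fin.CommRing

variable {n : ℕ} [NeZero n] {P : Finset (Fin n)}

lemma cycleGraph_adj_iff (hn : 2 ≤ n) {u v : Fin n} :
    (cycleGraph n).Adj u v ↔ v = u + 1 ∨ u = v + 1 := by
  obtain ⟨m, rfl⟩ := Nat.exists_eq_add_of_le' hn
  rw [cycleGraph_adj, sub_eq_iff_eq_add', sub_eq_iff_eq_add', or_comm]

lemma cycleGraph_closedNbhd_iff (hn : 2 ≤ n) (s x : Fin n) :
    (x = s + 1 ∨ (cycleGraph n).Adj (s + 1) x) ↔ x = s ∨ x = s + 1 ∨ x = s + 2 := by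
  rw [cycleGraph_adj_iff hn, add_assoc, one_add_one_eq_two, add_left_inj]
  tauto

/-- The vertex `s + 1` has no vertex of `P` in its closed neighbourhood. -/
def IsHole (P : Finset (Fin n)) (s : Fin n) : Prop := s ∉ P ∧ s + 1 ∉ P ∧ s + 2 ∉ P

def HolesAdjacent (P : Finset (Fin n)) : Prop :=
  ∀ s t, IsHole P s → IsHole P t → t = s ∨ t = s + 1 ∨ s = t + 1

def NoLonelyVertex (P : Finset (Fin n)) : Prop :=
  ∀ s, s + 2 ∈ P → s ∈ P ∨ s + 1 ∈ P ∨ s + 3 ∈ P ∨ s + 4 ∈ P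

lemma isHole_iff_forall {s : Fin n} :
    IsHole P s ↔ ∀ x ∈ P, ¬(x = s ∨ x = s + 1 ∨ x = s + 2) := by
  refine ⟨fun hs x hx => ?_, fun h => ⟨fun hs => h _ hs (.inl rfl),
    fun hs => h _ hs (.inr (.inl rfl)), fun hs => h _ hs (.inr (.inr rfl))⟩⟩
  rintro (rfl | rfl | rfl)
  exacts [hs.1 hx, hs.2.1 hx, hs.2.2 hx]

lemma IsNLLocating.eq_of_isHole (hP : IsNLLocating (cycleGraph n) P) (hn : 2 ≤ n)
    {s t : Fin n} (hs : IsHole P s) (ht : IsHole P t) : t = s ∨ t = s + 1 ∨ s = t + 1 := by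
  simp_rw [isHole_iff_forall, ← cycleGraph_closedNbhd_iff hn] at hs ht
  rcases hP.eq_or_adj hs ht with h | h
  · exact .inl (add_right_cancel h).symm
  · rw [cycleGraph_adj_iff hn, add_left_inj, add_left_inj] at h
    exact .inr h

lemma exists_mem_separating (hn : 5 ≤ n) {s t : Fin n} (hst : t = s + 2)
    (hnear : s ∈ P ∨ s + 1 ∈ P ∨ s + 3 ∈ P ∨ s + 4 ∈ P) :
    ∃ x ∈ P, ¬((x = s ∨ x = s + 1 ∨ x = s + 2) ↔ (x = t ∨ x = t + 1 ∨ x = t + 2)) := by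
  subst hst
  rcases hnear with h | h | h | h <;> refine ⟨_, h, ?_⟩ <;>
    simp [Fin.ext_iff, Fin.val_add_eq_ite, mod_eq_self_of_le_four hn] <;> grind

lemma IsNLLocating.mem_near (hP : IsNLLocating (cycleGraph n) P) (hn : 5 ≤ n) {s : Fin n}
    (hs : s + 2 ∈ P) : s ∈ P ∨ s + 1 ∈ P ∨ s + 3 ∈ P ∨ s + 4 ∈ P := by
  by_contra! h
  have hne : s + 1 ≠ s + 2 + 1 := by simp [Fin.ext_iff, mod_eq_self_of_le_four hn]
  have hnadj : ¬(cycleGraph n).Adj (s + 1) (s + 2 + 1) := by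
    rw [cycleGraph_adj_iff (by omega)]
    simp [Fin.ext_iff, Fin.val_add_eq_ite, mod_eq_self_of_le_four hn]; grind
  obtain ⟨x, hx, hsep⟩ := hP _ _ hne hnadj
  rw [cycleGraph_closedNbhd_iff (by omega), cycleGraph_closedNbhd_iff (by omega)] at hsep
  have hxs : x ≠ s ∧ x ≠ s + 1 ∧ x ≠ s + 3 ∧ x ≠ s + 4 := by
    refine ⟨?_, ?_, ?_, ?_⟩ <;> rintro rfl <;> simp_all
  simp [Fin.ext_iff, Fin.val_add_eq_ite, mod_eq_self_of_le_four hn] at hsep hxs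
  grind

lemma eq_add_two_of_closedNbhd (hn : 5 ≤ n) {s t x : Fin n}
    (hst : t ≠ s ∧ t ≠ s + 1 ∧ s ≠ t + 1) (hxs : x = s ∨ x = s + 1 ∨ x = s + 2)
    (hxt : x = t ∨ x = t + 1 ∨ x = t + 2) :
    (t = s + 2 ∧ x = s + 2) ∨ (s = t + 2 ∧ x = t + 2) := by
  simp [Fin.ext_iff, Fin.val_add_eq_ite, mod_eq_self_of_le_four hn] at hst hxs hxt ⊢
  grind

lemma isNLLocating_cycleGraph_of (hn : 5 ≤ n) (hhole : HolesAdjacent P)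
    (hnear : NoLonelyVertex P) : IsNLLocating (cycleGraph n) P := by
  have hn2 : 2 ≤ n := by omega
  intro u v huv hadj
  obtain ⟨s, rfl⟩ : ∃ s, u = s + 1 := ⟨u - 1, (sub_add_cancel u 1).symm⟩
  obtain ⟨t, rfl⟩ : ∃ t, v = t + 1 := ⟨v - 1, (sub_add_cancel v 1).symm⟩
  simp_rw [cycleGraph_closedNbhd_iff hn2]
  by_contra! hsame
  have hst : t ≠ s ∧ t ≠ s + 1 ∧ s ≠ t + 1 := by
    rw [cycleGraph_adj_iff hn2, add_left_inj, add_left_inj] at hadj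
    exact ⟨fun h => huv (h ▸ rfl), fun h => hadj (.inl h), fun h => hadj (.inr h)⟩
  by_cases hs : IsHole P s
  · have ht : IsHole P t := isHole_iff_forall.2 fun x hx h =>
      isHole_iff_forall.1 hs x hx ((hsame x hx).2 h)
    rcases hhole s t hs ht with h | h | h
    exacts [hst.1 h, hst.2.1 h, hst.2.2 h]
  · simp only [isHole_iff_forall, not_forall, not_not, exists_prop] at hs
    obtain ⟨x, hx, hxs⟩ := hs
    rcases eq_add_two_of_closedNbhd hn hst hxs ((hsame x hx).1 hxs) with ⟨h, rfl⟩ | ⟨h, rfl⟩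
    · obtain ⟨y, hy, hsep⟩ := exists_mem_separating hn h (hnear s hx)
      exact hsep (hsame y hy)
    · obtain ⟨y, hy, hsep⟩ := exists_mem_separating hn h (hnear t hx)
      exact hsep (hsame y hy).symm

theorem isNLLocating_cycleGraph_iff (hn : 5 ≤ n) :
    IsNLLocating (cycleGraph n) P ↔ HolesAdjacent P ∧ NoLonelyVertex P :=
  ⟨fun hP => ⟨fun _ _ => hP.eq_of_isHole (by omega), fun _ => hP.mem_near hn⟩,
    fun h => isNLLocating_cycleGraph_of hn h.1 h.2⟩

end cycleGraph

section lowerBound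

open scoped Fin.CommRing

variable {n : ℕ} [NeZero n] {P : Finset (Fin n)}

def windowCount (P : Finset (Fin n)) (i : Fin n) : ℕ :=
  #{k ∈ range 5 | i + ((k : ℕ) : Fin n) ∈ P}

lemma sum_windowCount (P : Finset (Fin n)) : ∑ i, windowCount P i = 5 * #P := by
  have hshift (k : ℕ) : ∑ i : Fin n, (if i + k ∈ P then 1 else 0) = #P :=
    (Equiv.sum_comp (Equiv.addRight (k : Fin n)) fun j => if j ∈ P then 1 else 0).trans (by simp)
  simp only [windowCount, card_filter]
  rw [sum_comm]
  simp [hshift]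

lemma windowCount_eq (P : Finset (Fin n)) (i : Fin n) :
    windowCount P i = (if i ∈ P then 1 else 0) + (if i + 1 ∈ P then 1 else 0) +
      (if i + 2 ∈ P then 1 else 0) + (if i + 3 ∈ P then 1 else 0) +
      (if i + 4 ∈ P then 1 else 0) := by
  simp only [windowCount, card_filter, sum_range_succ, sum_range_zero, Nat.cast_zero, Nat.cast_one,
    Nat.cast_ofNat, add_zero, zero_add]

lemma HolesAdjacent.one_le_windowCount (hhole : HolesAdjacent P) (hn : 5 ≤ n) (i : Fin n) :
    1 ≤ windowCount P i := by
  by_contra! h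
  simp only [windowCount_eq, Order.lt_one_iff, Nat.add_eq_zero_iff, ite_eq_right_iff,
    one_ne_zero, imp_false] at h
  obtain ⟨⟨⟨⟨h0, h1⟩, h2⟩, h3⟩, h4⟩ := h
  have hfar : ¬(i + 2 = i ∨ i + 2 = i + 1 ∨ i = i + 2 + 1) := by
    simp [Fin.ext_iff, Fin.val_add_eq_ite, mod_eq_self_of_le_four hn]; grind
  have e3 : i + 2 + 1 = i + 3 := by ring
  have e4 : i + 2 + 2 = i + 4 := by ring
  exact hfar (hhole i (i + 2) ⟨h0, h1, h2⟩ ⟨h2, e3 ▸ h3, e4 ▸ h4⟩)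

lemma NoLonelyVertex.isHole_of_windowCount_le_one (hnear : NoLonelyVertex P) (i : Fin n)
    (h : windowCount P i ≤ 1) : IsHole P i ∨ IsHole P (i + 1) ∨ IsHole P (i + 2) := by
  rw [windowCount_eq] at h
  have e : i + 1 + 1 = i + 2 ∧ i + 1 + 2 = i + 3 ∧ i + 2 + 1 = i + 3 ∧ i + 2 + 2 = i + 4 :=
    ⟨by ring, by ring, by ring, by ring⟩
  simp only [IsHole, e]
  by_cases h2 : i + 2 ∈ P
  · rcases hnear i h2 with h' | h' | h' | h' <;> simp only [h', h2, if_true] at h <;> omega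
  by_cases h1 : i + 1 ∈ P
  · have h3 : i + 3 ∉ P := fun h3 => by simp only [h1, h3, if_true] at h; omega
    have h4 : i + 4 ∉ P := fun h4 => by simp only [h1, h4, if_true] at h; omega
    exact .inr (.inr ⟨h2, h3, h4⟩)
  by_cases h3 : i + 3 ∈ P
  · have h0 : i ∉ P := fun h0 => by simp only [h0, h3, if_true] at h; omega
    exact .inl ⟨h0, h1, h2⟩
  · exact .inr (.inl ⟨h1, h2, h3⟩)

lemma HolesAdjacent.exists_isHole_eq_or_eq_add_one (hhole : HolesAdjacent P) (hn : 5 ≤ n) :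
    ∃ a, ∀ s, IsHole P s → s = a ∨ s = a + 1 := by
  by_cases h : ∃ a, IsHole P a ∧ IsHole P (a + 1)
  · obtain ⟨a, ha, ha1⟩ := h
    refine ⟨a, fun s hs => ?_⟩
    have h1 := hhole a s ha hs
    have h2 := hhole (a + 1) s ha1 hs
    clear hhole ha ha1 hs
    simp [Fin.ext_iff, Fin.val_add_eq_ite, mod_eq_self_of_le_four hn] at h1 h2 ⊢
    grind
  · simp only [not_exists, not_and] at h
    by_cases h' : ∃ a, IsHole P a
    · obtain ⟨a, ha⟩ := h'
      refine ⟨a, fun s hs => ?_⟩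
      rcases hhole a s ha hs with rfl | rfl | rfl
      · exact .inl rfl
      · exact .inr rfl
      · exact absurd ha (h s hs)
    · exact ⟨0, fun s hs => (h' ⟨s, hs⟩).elim⟩

theorem IsNLLocating.two_mul_le_five_mul_card_add_four (hP : IsNLLocating (cycleGraph n) P)
    (hn : 5 ≤ n) : 2 * n ≤ 5 * #P + 4 := by
  obtain ⟨hhole, hnear⟩ := (isNLLocating_cycleGraph_iff hn).1 hP
  obtain ⟨a, ha⟩ := hhole.exists_isHole_eq_or_eq_add_one hn
  obtain ⟨b, rfl⟩ : ∃ b, a = b + 2 := ⟨a - 2, (sub_add_cancel a 2).symm⟩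
  set T : Finset (Fin n) := {b, b + 1, b + 2, b + 3}
  have hwin (i : Fin n) : 2 ≤ windowCount P i + if i ∈ T then 1 else 0 := by
    have := hhole.one_le_windowCount hn i
    split_ifs with hi
    · omega
    · by_contra! hlt
      apply hi
      rcases hnear.isHole_of_windowCount_le_one i (by omega) with h | h | h <;>
        rcases ha _ h with h' | h' <;>
        simp [T, Fin.ext_iff, Fin.val_add_eq_ite, mod_eq_self_of_le_four hn] at h' ⊢ <;> grind
  calc 2 * n = ∑ _i : Fin n, 2 := by simp [mul_comm]
    _ ≤ ∑ i, (windowCount P i + if i ∈ T then 1 else 0) := sum_le_sum fun i _ => hwin i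
    _ = 5 * #P + #T := by simp [sum_add_distrib, sum_windowCount]
    _ ≤ 5 * #P + 4 := by gcongr; exact card_le_four

end lowerBound

def nlLocatingSet (n : ℕ) : Finset (Fin n) :=
  {x | (x.val < 5 * (n / 5) ∧ (x.val % 5 = 0 ∨ x.val % 5 = 2)) ∨ (3 ≤ n % 5 ∧ x.val + 2 = n)}

lemma card_nlLocatingSet (n : ℕ) : #(nlLocatingSet n) = 2 * n / 5 := by
  rw [← card_range (2 * n / 5)]
  refine card_bij (fun x _ => if x.val < 5 * (n / 5) then 2 * (x.val / 5) + x.val % 5 / 2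
    else 2 * (n / 5)) ?_ ?_ ?_
  · intro x hx
    simp only [nlLocatingSet, mem_filter, mem_univ, true_and] at hx
    simp only [mem_range]
    split_ifs <;> omega
  · intro x hx y hy hxy
    simp only [nlLocatingSet, mem_filter, mem_univ, true_and] at hx hy
    ext
    split_ifs at hxy <;> omega
  · intro k hk
    simp only [mem_range] at hk
    by_cases hkq : k < 2 * (n / 5)
    · obtain ⟨d, t, ht, rfl⟩ : ∃ d t, t < 2 ∧ k = 2 * d + t :=
        ⟨k / 2, k % 2, Nat.mod_lt _ two_pos, (Nat.div_add_mod k 2).symm⟩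
      refine ⟨⟨5 * d + 2 * t, by omega⟩, ?_, ?_⟩
      · simp only [nlLocatingSet, mem_filter, mem_univ, true_and]
        interval_cases t <;> omega
      · dsimp only
        rw [if_pos (by omega)]
        interval_cases t <;> omega
    · refine ⟨⟨n - 2, by omega⟩, ?_, ?_⟩
      · simp only [nlLocatingSet, mem_filter, mem_univ, true_and]
        omega
      · dsimp only
        rw [if_neg (by omega)]
        omega

section construction

variable {n : ℕ} [NeZero n]

lemma val_of_isHole_nlLocatingSet (hn : 5 ≤ n) {s : Fin n} (hs : IsHole (nlLocatingSet n) s) :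
    s.val + 2 = 5 * (n / 5) ∨ s.val + 1 = 5 * (n / 5) := by
  simp [IsHole, nlLocatingSet, Fin.val_add_eq_ite, mod_eq_self_of_le_four hn] at hs
  grind

lemma holesAdjacent_nlLocatingSet (hn : 5 ≤ n) : HolesAdjacent (nlLocatingSet n) := by
  intro s t hs ht
  have hs' := val_of_isHole_nlLocatingSet hn hs
  have ht' := val_of_isHole_nlLocatingSet hn ht
  simp [Fin.ext_iff, Fin.val_add_eq_ite, mod_eq_self_of_le_four hn]
  grind

lemma noLonelyVertex_nlLocatingSet (hn : 5 ≤ n) : NoLonelyVertex (nlLocatingSet n) := by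
  intro s hs
  simp [nlLocatingSet, Fin.val_add_eq_ite, mod_eq_self_of_le_four hn] at hs ⊢
  grind

lemma isNLLocating_nlLocatingSet (hn : 5 ≤ n) : IsNLLocating (cycleGraph n) (nlLocatingSet n) :=
  (isNLLocating_cycleGraph_iff hn).2
    ⟨holesAdjacent_nlLocatingSet hn, noLonelyVertex_nlLocatingSet hn⟩

end construction

/-- For every `n ≥ 7`, `dim_nl(W_{1,n}) = ⌊2n/5⌋`. -/
theorem stmt_8 (n : ℕ) (hn : 7 ≤ n) :
    nldim (wheel n) = 2 * n / 5 := by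
  have : NeZero n := ⟨by omega⟩
  have hloc := isNLLocating_nlLocatingSet (n := n) (by omega)
  rw [wheel, nldim_joinK1]
  apply le_antisymm
  · exact Nat.sInf_le ⟨_, card_nlLocatingSet n, hloc⟩
  · refine le_csInf ⟨_, _, card_nlLocatingSet n, hloc⟩ ?_
    rintro k ⟨P, rfl, hP⟩
    have := hP.two_mul_le_five_mul_card_add_four (by omega)
    omega
end

section
/- Let n ≥ 7 and let S be a nonlocal metric basis of the wheel W_{1,n} (so S ⊆ V(C_n), |S| ≥ 2). If some gap A_{i,j} of S contains at least 2 vertices, then each of the two neighboring gaps of A_{i,j} contains at most one vertex. -/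
/-!
Distinct rim vertices of a wheel are at distance `1` or `2`, according to whether they are
adjacent on the cycle. Hence `m - 1` and `m + 1` are non-adjacent and have the same distance to
every rim vertex other than `m ± 1`, `m ± 2`, so a nonlocal resolving set meets
`{m - 2, m - 1, m + 1, m + 2}` for every rim vertex `m`. If two neighboring gaps `A_{h,i}`,
`A_{i,j}` both had at least two vertices, the set `S` would miss `i - 2, i - 1, i + 1, i + 2`.
-/

open scoped Fin.CommRing
open SimpleGraph

theorem cycleGraph_adj_iff_eq_sub_one_or_eq_add_one {n : ℕ} {v w : Fin (n + 2)} :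
    (cycleGraph (n + 2)).Adj v w ↔ w = v - 1 ∨ w = v + 1 :=
  Set.ext_iff.mp cycleGraph_neighborSet w

theorem wheel_adj_none_some {n : ℕ} (a : Fin n) : (wheel n).Adj none (some a) := by
  simp [wheel, joinK1]

theorem wheel_adj_some_some {n : ℕ} {a b : Fin n} :
    (wheel n).Adj (some a) (some b) ↔ (cycleGraph n).Adj a b := by
  simp only [wheel, joinK1, fromRel_adj, Option.some.injEq, reduceCtorEq, false_or,
    exists_and_left, exists_eq_left']
  exact ⟨fun ⟨_, h⟩ => h.elim id (·.symm),
    fun h => ⟨(Option.some_injective _).ne h.ne, .inl h⟩⟩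

theorem wheel_dist_some_some {n : ℕ} {a b : Fin n} (hab : a ≠ b) :
    (wheel n).dist (some a) (some b) = if (cycleGraph n).Adj a b then 1 else 2 := by
  split_ifs with hadj
  · exact dist_eq_one_iff_adj.mpr (wheel_adj_some_some.mpr hadj)
  · have hedist : (wheel n).edist (some a) (some b) = 2 :=
      edist_eq_two_iff.mpr ⟨by simpa using hab, mt wheel_adj_some_some.mp hadj,
        ⟨none, (mem_commonNeighbors _).mpr
          ⟨(wheel_adj_none_some a).symm, (wheel_adj_none_some b).symm⟩⟩⟩
    have hreach : (wheel n).Reachable (some a) (some b) :=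
      reachable_of_edist_ne_top (by simp [hedist])
    exact_mod_cast hreach.coe_dist_eq_edist.trans hedist

theorem wheel_dist_sub_one_eq_dist_add_one {n : ℕ} {m s : Fin (n + 2)}
    (hs : s ∉ ({m - 2, m - 1, m + 1, m + 2} : Finset (Fin (n + 2)))) :
    (wheel (n + 2)).dist (some (m - 1)) (some s) =
      (wheel (n + 2)).dist (some (m + 1)) (some s) := by
  simp only [Finset.mem_insert, Finset.mem_singleton, not_or] at hs
  obtain ⟨hs₂, hs₁, hs₁', hs₂'⟩ := hs
  rw [wheel_dist_some_some (Ne.symm hs₁), wheel_dist_some_some (Ne.symm hs₁')]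
  simp only [cycleGraph_adj_iff_eq_sub_one_or_eq_add_one, sub_add_cancel, add_sub_cancel_right,
    show m - 1 - 1 = m - 2 by ring, show m + 1 + 1 = m + 2 by ring, hs₂, hs₂', false_or,
    or_false]

theorem IsNLResolving.wheel_near_mem {n : ℕ} {S : Finset (Fin (n + 4))}
    (hres : IsNLResolving (wheel (n + 4)) (S.image some)) (m : Fin (n + 4)) :
    ∃ s ∈ S, s ∈ ({m - 2, m - 1, m + 1, m + 2} : Finset (Fin (n + 4))) := by
  have hval : ∀ k : ℕ, 0 < k → k < 4 → (k : Fin (n + 4)) ≠ 0 := fun k hk0 hk4 hk => by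
    have := congrArg Fin.val hk
    rw [Fin.val_natCast, Nat.mod_eq_of_lt (by omega), Fin.val_zero] at this
    omega
  have hne : some (m - 1) ≠ some (m + 1) :=
    (Option.some_injective _).ne fun h =>
      hval 2 (by norm_num) (by norm_num) (by linear_combination -h)
  have hnadj : ¬ (wheel (n + 4)).Adj (some (m - 1)) (some (m + 1)) := by
    rw [wheel_adj_some_some, cycleGraph_adj_iff_eq_sub_one_or_eq_add_one]
    rintro (h | h)
    · exact hval 3 (by norm_num) (by norm_num) (by linear_combination h)
    · exact hval 1 (by norm_num) (by norm_num) (by linear_combination h)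
  by_contra! hfar
  obtain ⟨x, hx, hdist⟩ := hres _ _ hne hnadj
  obtain ⟨s, hs, rfl⟩ := Finset.mem_image.mp hx
  exact hdist (wheel_dist_sub_one_eq_dist_add_one (hfar s hs))

theorem IsGap.add_notMem {n : ℕ} [NeZero n] {S : Finset (Fin n)} {i j : Fin n} (hg : IsGap S i j)
    {d : ℕ} (hd₀ : 0 < d) (hd : d < (j - i).val) : i + d ∉ S := by
  have hdi : (i + d - i).val = d := by
    rw [add_sub_cancel_left, Fin.val_natCast, Nat.mod_eq_of_lt (hd.trans (j - i).isLt)]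
  exact hg.2.2.2 _ (by rw [hdi]; exact hd₀) (by rw [hdi]; exact hd)

theorem IsGap.sub_notMem {n : ℕ} [NeZero n] {S : Finset (Fin n)} {i j : Fin n} (hg : IsGap S i j)
    {d : ℕ} (hd₀ : 0 < d) (hd : d < (j - i).val) : j - d ∉ S := by
  have hd' : (d : Fin n).val = d := by
    rw [Fin.val_natCast, Nat.mod_eq_of_lt (hd.trans (j - i).isLt)]
  have hdi : (j - d - i).val = (j - i).val - d := by
    rw [sub_right_comm, Fin.coe_sub_iff_le.mpr (by rw [Fin.le_def, hd']; omega), hd']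
  exact hg.2.2.2 _ (by omega) (by omega)

theorem gapSize_le_one_or_gapSize_le_one {n : ℕ} {S : Finset (Fin (n + 4))}
    (hres : IsNLResolving (wheel (n + 4)) (S.image some)) {h i j : Fin (n + 4)}
    (hhi : IsGap S h i) (hij : IsGap S i j) : gapSize h i ≤ 1 ∨ gapSize i j ≤ 1 := by
  by_contra! hbig
  obtain ⟨hhi_size, hij_size⟩ := hbig
  unfold gapSize at hhi_size hij_size
  obtain ⟨s, hs, hnear⟩ := hres.wheel_near_mem i
  simp only [Finset.mem_insert, Finset.mem_singleton] at hnear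
  rcases hnear with rfl | rfl | rfl | rfl
  · exact hhi.sub_notMem (d := 2) (by norm_num) (by omega) (by simpa using hs)
  · exact hhi.sub_notMem (d := 1) (by norm_num) (by omega) (by simpa using hs)
  · exact hij.add_notMem (d := 1) (by norm_num) (by omega) (by simpa using hs)
  · exact hij.add_notMem (d := 2) (by norm_num) (by omega) (by simpa using hs)

theorem stmt_11_general (n : ℕ) (hn : 7 ≤ n) (S : Finset (Fin n))
    (hres : IsNLResolving (wheel n) (S.image some)) :
    ∀ i j : Fin n, IsGap S i j → 2 ≤ gapSize i j →
      (∀ h : Fin n, IsGap S h i → gapSize h i ≤ 1) ∧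
      (∀ k : Fin n, IsGap S j k → gapSize j k ≤ 1) := by
  obtain ⟨n, rfl⟩ : ∃ k, n = k + 4 := ⟨n - 4, by omega⟩
  intro i j hij hsize
  exact ⟨fun h hhi => (gapSize_le_one_or_gapSize_le_one hres hhi hij).resolve_right (by omega),
    fun k hjk => (gapSize_le_one_or_gapSize_le_one hres hij hjk).resolve_left (by omega)⟩

/-- If `S ⊆ V(Cₙ)` is a nonlocal metric basis of the wheel
`W_{1,n}`, `n ≥ 7`, `|S| ≥ 2`, and a gap `A_{i,j}` of `S` has at least `2`
vertices, then each of its two neighboring gaps has at most one vertex. -/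
theorem stmt_11 (n : ℕ) (hn : 7 ≤ n) (S : Finset (Fin n)) (hS : 2 ≤ S.card)
    (hres : IsNLResolving (wheel n) (S.image some))
    (hmin : (S.image some).card = nldim (wheel n)) :
    ∀ i j : Fin n, IsGap S i j → 2 ≤ gapSize i j →
      (∀ h : Fin n, IsGap S h i → gapSize h i ≤ 1) ∧
      (∀ k : Fin n, IsGap S j k → gapSize j k ≤ 1) :=
  stmt_11_general n hn S hres
end
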